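/- (The constant-mean-curvature condition forces vanishing twist.) Let Ω ⊆ ℂ be a nonempty open connected set, let F : ℂ → ℂ be smooth, and define σ, θ, λ from F as in the context. Suppose that for all ξ ∈ Ω, ∂θ(ξ) + 2 * conj (F ξ) / (1 + |ξ|²)² = 0. Then λ ξ = 0 for all ξ ∈ Ω; that is, the line congruence is twist-free (Lagrangian), and its lines are orthogonal to a 1-parameter family of surfaces. -/

import Mathlib

noncomputable section

open Complex

/-- Wirtinger derivative `∂F(ξ) = (1/2)(Dₓ - i D_y)`. -/
def wdz (F : ℂ → ℂ) (ξ : ℂ) : ℂ :=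
  (1 / 2 : ℂ) * (fderiv ℝ F ξ 1 - Complex.I * fderiv ℝ F ξ Complex.I)

/-- Wirtinger derivative `∂̄F(ξ) = (1/2)(Dₓ + i D_y)`. -/
def wdzbar (F : ℂ → ℂ) (ξ : ℂ) : ℂ :=
  (1 / 2 : ℂ) * (fderiv ℝ F ξ 1 + Complex.I * fderiv ℝ F ξ Complex.I)

/-- The shear of the line congruence `ξ ↦ (ξ, η = F ξ)`. -/
def shear (F : ℂ → ℂ) (ξ : ℂ) : ℂ :=
  - wdz (fun ζ => (starRingEnd ℂ) (F ζ)) ξ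

/-- `ρ = θ + iλ`, the complexified divergence and twist of the congruence. -/
def rhoC (F : ℂ → ℂ) (ξ : ℂ) : ℂ :=
  ((1 + ‖ξ‖ ^ 2 : ℝ) : ℂ) ^ 2 *
    wdz (fun ζ => F ζ / ((1 + ‖ζ‖ ^ 2 : ℝ) : ℂ) ^ 2) ξ

/-- The divergence `θ` of the congruence. -/
def thetaC (F : ℂ → ℂ) (ξ : ℂ) : ℝ := (rhoC F ξ).re

/-- The twist `λ` of the congruence. -/
def twistC (F : ℂ → ℂ) (ξ : ℂ) : ℝ := (rhoC F ξ).im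

/-! ### Auxiliary material -/

/-- `uC ζ = 1 + |ζ|²` as a complex number. -/
def uC (ζ : ℂ) : ℂ := ((1 + ‖ζ‖ ^ 2 : ℝ) : ℂ)

lemma uC_ne (ζ : ℂ) : uC ζ ≠ 0 := by
  simp only [uC, ne_eq, Complex.ofReal_eq_zero]; positivity

lemma uC_eq : uC = fun ζ : ℂ => 1 + ζ * (starRingEnd ℂ) ζ := by
  funext ζ; rw [uC, Complex.mul_conj]; push_cast [Complex.sq_norm]; ring

lemma conj_uC (ζ : ℂ) : (starRingEnd ℂ) (uC ζ) = uC ζ := Complex.conj_ofReal _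

/-- The (real) derivative of `uC`. -/
def uL (ξ : ℂ) : ℂ →L[ℝ] ℂ :=
  ξ • (Complex.conjCLE : ℂ ≃L[ℝ] ℂ).toContinuousLinearMap
    + (starRingEnd ℂ ξ) • ContinuousLinearMap.id ℝ ℂ

lemma hasFDerivAt_uC (ξ : ℂ) : HasFDerivAt uC (uL ξ) ξ := by
  rw [uC_eq]
  have h1 : HasFDerivAt (fun ζ : ℂ => ζ) (ContinuousLinearMap.id ℝ ℂ) ξ := hasFDerivAt_id ξ
  have h2 : HasFDerivAt (fun ζ : ℂ => (starRingEnd ℂ) ζ)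
      ((Complex.conjCLE : ℂ ≃L[ℝ] ℂ).toContinuousLinearMap) ξ := Complex.conjCLE.hasFDerivAt
  have := (hasFDerivAt_const (1:ℂ) ξ).add (h1.mul h2)
  exact this.congr_fderiv (by simp [uL])

lemma uL_apply (ξ v : ℂ) : uL ξ v = ξ * (starRingEnd ℂ) v + (starRingEnd ℂ) ξ * v := by
  simp [uL, smul_eq_mul]

/-- The (real) derivative of `ζ ↦ ((uC ζ)²)⁻¹`. -/
def qL (ξ : ℂ) : ℂ →L[ℝ] ℂ :=
  ((ContinuousLinearMap.smulRight (1 : ℂ →L[ℂ] ℂ) (-((uC ξ ^ 2) ^ 2)⁻¹)).restrictScalars ℝ).comp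
    ((uC ξ • uL ξ) + (uC ξ • uL ξ))

lemma hasFDerivAt_q (ξ : ℂ) : HasFDerivAt (fun ζ => ((uC ζ) ^ 2)⁻¹) (qL ξ) ξ := by
  have hs : HasFDerivAt (fun ζ => (uC ζ) ^ 2) ((uC ξ • uL ξ) + (uC ξ • uL ξ)) ξ := by
    have := (hasFDerivAt_uC ξ).mul (hasFDerivAt_uC ξ)
    simp only [pow_two]; exact this
  have hinv : HasFDerivAt (fun z : ℂ => z⁻¹)
      ((ContinuousLinearMap.smulRight (1 : ℂ →L[ℂ] ℂ) (-((uC ξ ^ 2) ^ 2)⁻¹)).restrictScalars ℝ)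
      ((uC ξ) ^ 2) :=
    (hasFDerivAt_inv (pow_ne_zero 2 (uC_ne ξ))).restrictScalars ℝ
  exact hinv.comp ξ hs

lemma qL_apply (ξ v : ℂ) :
    qL ξ v = -((uC ξ ^ 2) ^ 2)⁻¹ * (2 * uC ξ * (ξ * (starRingEnd ℂ) v + (starRingEnd ℂ) ξ * v)) := by
  simp [qL, uL_apply, smul_eq_mul]
  ring

/-- Closed formula for `ρ`. -/
lemma rho_formula (F : ℂ → ℂ) {ξ : ℂ} (hF : DifferentiableAt ℝ F ξ) :
    rhoC F ξ = wdz F ξ - 2 * F ξ * (starRingEnd ℂ) ξ / uC ξ := by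
  have hP : HasFDerivAt (fun ζ => F ζ / (uC ζ) ^ 2)
      (F ξ • qL ξ + ((uC ξ ^ 2)⁻¹) • fderiv ℝ F ξ) ξ := by
    have := hF.hasFDerivAt.mul (hasFDerivAt_q ξ)
    simp only [div_eq_mul_inv]; exact this
  have hrho : rhoC F ξ = (uC ξ)^2 * ((1/2 : ℂ) *
      ((F ξ • qL ξ + ((uC ξ ^ 2)⁻¹) • fderiv ℝ F ξ) 1
        - Complex.I * (F ξ • qL ξ + ((uC ξ ^ 2)⁻¹) • fderiv ℝ F ξ) Complex.I)) := by
    rw [rhoC, wdz]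
    rw [show (fun ζ => F ζ / ((1 + ‖ζ‖ ^ 2 : ℝ) : ℂ) ^ 2)
        = (fun ζ => F ζ / (uC ζ) ^ 2) from rfl, hP.fderiv]
    rfl
  rw [hrho, wdz]
  simp only [ContinuousLinearMap.add_apply, ContinuousLinearMap.smul_apply, qL_apply,
    smul_eq_mul, map_one, Complex.conj_I, mul_one]
  have hu := uC_ne ξ
  field_simp
  ring_nf
  simp only [Complex.I_sq]
  ring

lemma hasFDerivAt_conjF (F : ℂ → ℂ) {ξ : ℂ} (hF : DifferentiableAt ℝ F ξ) :
    HasFDerivAt (fun ζ => (starRingEnd ℂ) (F ζ))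
      ((Complex.conjCLE : ℂ ≃L[ℝ] ℂ).toContinuousLinearMap.comp (fderiv ℝ F ξ)) ξ :=
  Complex.conjCLE.hasFDerivAt.comp ξ hF.hasFDerivAt

/-- `∂̄` of `-2 F̄ / u²`. -/
lemma hbar_formula (F : ℂ → ℂ) {ξ : ℂ} (hF : DifferentiableAt ℝ F ξ) :
    wdzbar (fun ζ => -(2 * (starRingEnd ℂ) (F ζ) / (uC ζ) ^ 2)) ξ
      = -2 * (starRingEnd ℂ) (wdz F ξ) / (uC ξ) ^ 2
        + 4 * (starRingEnd ℂ) (F ξ) * ξ / (uC ξ) ^ 3 := by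
  have hfun : (fun ζ => -(2 * (starRingEnd ℂ) (F ζ) / (uC ζ) ^ 2))
      = fun ζ => ((-2 : ℂ) * (starRingEnd ℂ) (F ζ)) * ((uC ζ) ^ 2)⁻¹ := by
    funext ζ; rw [div_eq_mul_inv]; ring
  have hc := hasFDerivAt_conjF F hF
  have hh := (hc.const_mul (-2 : ℂ)).mul (hasFDerivAt_q ξ)
  rw [hfun, wdzbar, HasFDerivAt.fderiv (f := fun ζ => ((-2 : ℂ) * (starRingEnd ℂ) (F ζ)) * ((uC ζ) ^ 2)⁻¹) hh]
  simp only [ContinuousLinearMap.add_apply, ContinuousLinearMap.smul_apply, qL_apply,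
    ContinuousLinearMap.comp_apply, ContinuousLinearEquiv.coe_coe, Complex.conjCLE_apply,
    smul_eq_mul, map_one, Complex.conj_I, wdz, map_mul, map_sub, map_div₀, map_ofNat]
  have hu := uC_ne ξ
  field_simp
  ring_nf
  simp only [Complex.I_sq]
  ring

lemma differentiable_h (F : ℂ → ℂ) (hF : Differentiable ℝ F) :
    Differentiable ℝ (fun ζ => -(2 * (starRingEnd ℂ) (F ζ) / (uC ζ) ^ 2)) := by
  have hfun : (fun ζ => -(2 * (starRingEnd ℂ) (F ζ) / (uC ζ) ^ 2))
      = fun ζ => ((-2 : ℂ) * (starRingEnd ℂ) (F ζ)) * ((uC ζ) ^ 2)⁻¹ := by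
    funext ζ; rw [div_eq_mul_inv]; ring
  rw [hfun]
  intro ζ
  exact (((hasFDerivAt_conjF F (hF ζ)).const_mul (-2 : ℂ)).mul (hasFDerivAt_q ζ)).differentiableAt

lemma wdz_congr {f g : ℂ → ℂ} {ξ : ℂ} (h : f =ᶠ[nhds ξ] g) : wdz f ξ = wdz g ξ := by
  rw [wdz, wdz, h.fderiv_eq]

lemma wdzbar_congr {f g : ℂ → ℂ} {ξ : ℂ} (h : f =ᶠ[nhds ξ] g) : wdzbar f ξ = wdzbar g ξ := by
  rw [wdzbar, wdzbar, h.fderiv_eq]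

/-- For a real-valued function, `∂̄G = conj (∂G)`. -/
lemma wdzbar_real (G : ℂ → ℂ) {ξ : ℂ} (hG : DifferentiableAt ℝ G ξ)
    (him : ∀ ζ, (G ζ).im = 0) : wdzbar G ξ = (starRingEnd ℂ) (wdz G ξ) := by
  have hzero : ∀ v : ℂ, (fderiv ℝ G ξ v).im = 0 := by
    intro v
    have h2 : HasFDerivAt (fun ζ => (G ζ).im) (Complex.imCLM.comp (fderiv ℝ G ξ)) ξ :=
      Complex.imCLM.hasFDerivAt.comp ξ hG.hasFDerivAt
    have h1 : (fun ζ => (G ζ).im) = fun _ => (0 : ℝ) := funext him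
    rw [h1] at h2
    have := h2.unique (hasFDerivAt_const (0:ℝ) ξ)
    have := congrFun (congrArg DFunLike.coe this) v
    simpa using this
  have c1 : (starRingEnd ℂ) (fderiv ℝ G ξ 1) = fderiv ℝ G ξ 1 :=
    Complex.conj_eq_iff_im.2 (hzero 1)
  have cI : (starRingEnd ℂ) (fderiv ℝ G ξ Complex.I) = fderiv ℝ G ξ Complex.I :=
    Complex.conj_eq_iff_im.2 (hzero Complex.I)
  rw [wdzbar, wdz]
  rw [map_mul, map_sub, map_mul, Complex.conj_I, c1, cI]
  simp only [map_div₀, map_one, map_ofNat]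
  ring

/-- `∂(conj ∘ h) = conj (∂̄ h)`. -/
lemma wdz_conj_comm (h : ℂ → ℂ) {ξ : ℂ} (hh : DifferentiableAt ℝ h ξ) :
    wdz (fun ζ => (starRingEnd ℂ) (h ζ)) ξ = (starRingEnd ℂ) (wdzbar h ξ) := by
  have hc := hasFDerivAt_conjF h hh
  rw [wdz, hc.fderiv, wdzbar]
  simp only [ContinuousLinearMap.comp_apply, ContinuousLinearEquiv.coe_coe,
    Complex.conjCLE_apply, map_mul, map_add, Complex.conj_I, map_div₀, map_one, map_ofNat]
  ring

/-- Symmetry of mixed Wirtinger derivatives for `C^∞` functions. -/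
lemma wdz_wdzbar_comm (G : ℂ → ℂ) (hG : ContDiff ℝ (⊤ : ℕ∞) G) (ξ : ℂ) :
    wdzbar (fun ζ => wdz G ζ) ξ = wdz (fun ζ => wdzbar G ζ) ξ := by
  set D := fderiv ℝ (fderiv ℝ G) ξ with hDdef
  have hGd : Differentiable ℝ G := hG.differentiable (by simp)
  have hG' : ContDiff ℝ (⊤ : ℕ∞) (fderiv ℝ G) := hG.fderiv_right (by simp)
  have hD : HasFDerivAt (fderiv ℝ G) D ξ := (hG'.differentiable (by simp) ξ).hasFDerivAt
  have hfv : ∀ v : ℂ, HasFDerivAt (fun ζ => fderiv ℝ G ζ v)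
      ((ContinuousLinearMap.apply ℝ ℂ v).comp D) ξ :=
    fun v => (ContinuousLinearMap.apply ℝ ℂ v).hasFDerivAt.comp ξ hD
  have hsymm : D 1 Complex.I = D Complex.I 1 :=
    second_derivative_symmetric (fun y => (hGd y).hasFDerivAt) hD 1 Complex.I
  have h1 : HasFDerivAt (fun ζ => wdz G ζ)
      ((1/2 : ℂ) • (((ContinuousLinearMap.apply ℝ ℂ 1).comp D)
        - Complex.I • ((ContinuousLinearMap.apply ℝ ℂ Complex.I).comp D))) ξ := by
    have := ((hfv 1).sub ((hfv Complex.I).const_mul Complex.I)).const_mul (1/2 : ℂ)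
    simpa [wdz] using this
  have h2 : HasFDerivAt (fun ζ => wdzbar G ζ)
      ((1/2 : ℂ) • (((ContinuousLinearMap.apply ℝ ℂ 1).comp D)
        + Complex.I • ((ContinuousLinearMap.apply ℝ ℂ Complex.I).comp D))) ξ := by
    have := ((hfv 1).add ((hfv Complex.I).const_mul Complex.I)).const_mul (1/2 : ℂ)
    simpa [wdzbar] using this
  rw [wdzbar, wdz, h1.fderiv, h2.fderiv]
  simp only [ContinuousLinearMap.smul_apply, ContinuousLinearMap.sub_apply,
    ContinuousLinearMap.add_apply, ContinuousLinearMap.comp_apply,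
    ContinuousLinearMap.apply_apply, smul_eq_mul]
  rw [hsymm]
  ring

lemma contDiff_uC : ContDiff ℝ (⊤ : ℕ∞) uC := by
  rw [uC_eq]
  exact contDiff_const.add (contDiff_id.mul Complex.conjCLE.contDiff)

lemma contDiff_wdz (F : ℂ → ℂ) (hF : ContDiff ℝ (⊤ : ℕ∞) F) :
    ContDiff ℝ (⊤ : ℕ∞) (fun ξ => wdz F ξ) := by
  have h := hF.fderiv_right (m := (⊤ : ℕ∞)) (by simp)
  have h1 : ContDiff ℝ (⊤ : ℕ∞) (fun ξ => fderiv ℝ F ξ 1) := h.clm_apply contDiff_const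
  have hI : ContDiff ℝ (⊤ : ℕ∞) (fun ξ => fderiv ℝ F ξ Complex.I) := h.clm_apply contDiff_const
  exact contDiff_const.mul (h1.sub (contDiff_const.mul hI))

lemma contDiff_rho (F : ℂ → ℂ) (hF : ContDiff ℝ (⊤ : ℕ∞) F) : ContDiff ℝ (⊤ : ℕ∞) (rhoC F) := by
  have hfun : rhoC F = fun ξ => wdz F ξ - 2 * F ξ * (starRingEnd ℂ) ξ * (uC ξ)⁻¹ := by
    funext ξ
    rw [rho_formula F ((hF.differentiable (by simp)) ξ), div_eq_mul_inv]
  rw [hfun]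
  exact (contDiff_wdz F hF).sub
    (((contDiff_const.mul hF).mul Complex.conjCLE.contDiff).mul (contDiff_uC.inv uC_ne))

/-- The constant-mean-curvature condition `∂θ + 2 F̄ /(1+|ξ|²)² = 0` forces the twist `λ`
to vanish: the line congruence is Lagrangian. -/
theorem cmc_condition_forces_twist_free
    (Ω : Set ℂ) (hΩ : IsOpen Ω) (hne : Ω.Nonempty) (hconn : IsConnected Ω)
    (F : ℂ → ℂ) (hF : ContDiff ℝ (⊤ : ℕ∞) F)
    (hcmc : ∀ ξ ∈ Ω, wdz (fun ζ => ((thetaC F ζ : ℝ) : ℂ)) ξ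
      + 2 * (starRingEnd ℂ) (F ξ) / ((1 + ‖ξ‖ ^ 2 : ℝ) : ℂ) ^ 2 = 0) :
    ∀ ξ ∈ Ω, twistC F ξ = 0 := by
  intro ξ hξ
  set G : ℂ → ℂ := fun ζ => ((thetaC F ζ : ℝ) : ℂ) with hGdef
  set h : ℂ → ℂ := fun ζ => -(2 * (starRingEnd ℂ) (F ζ) / (uC ζ) ^ 2) with hhdef
  have hGsmooth : ContDiff ℝ (⊤ : ℕ∞) G := by
    exact Complex.ofRealCLM.contDiff.comp (Complex.reCLM.contDiff.comp (contDiff_rho F hF))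
  have hGim : ∀ ζ, (G ζ).im = 0 := fun ζ => Complex.ofReal_im _
  have hhdiff : Differentiable ℝ h := differentiable_h F (hF.differentiable (by simp))
  have hwdzG : ∀ ζ ∈ Ω, wdz G ζ = h ζ := by
    intro ζ hζ
    have := hcmc ζ hζ
    have h2 : wdz G ζ = -(2 * (starRingEnd ℂ) (F ζ) / ((1 + ‖ζ‖ ^ 2 : ℝ) : ℂ) ^ 2) :=
      eq_neg_of_add_eq_zero_left this
    exact h2
  have hmem : Ω ∈ nhds ξ := hΩ.mem_nhds hξ
  have hev1 : (fun ζ => wdz G ζ) =ᶠ[nhds ξ] h := by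
    filter_upwards [hmem] with ζ hζ using hwdzG ζ hζ
  have hev2 : (fun ζ => wdzbar G ζ) =ᶠ[nhds ξ] (fun ζ => (starRingEnd ℂ) (h ζ)) := by
    filter_upwards [hmem] with ζ hζ
    rw [wdzbar_real G ((hGsmooth.differentiable (by simp)) ζ) hGim, hwdzG ζ hζ]
  -- key: ∂̄h(ξ) is "real"
  have hkey : (starRingEnd ℂ) (wdzbar h ξ) = wdzbar h ξ := by
    calc (starRingEnd ℂ) (wdzbar h ξ)
        = wdz (fun ζ => (starRingEnd ℂ) (h ζ)) ξ := (wdz_conj_comm h (hhdiff ξ)).symm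
      _ = wdz (fun ζ => wdzbar G ζ) ξ := (wdz_congr hev2).symm
      _ = wdzbar (fun ζ => wdz G ζ) ξ := (wdz_wdzbar_comm G hGsmooth ξ).symm
      _ = wdzbar h ξ := wdzbar_congr hev1
  -- now compute
  have he : wdzbar h ξ = -2 * (starRingEnd ℂ) (wdz F ξ) / (uC ξ) ^ 2
      + 4 * (starRingEnd ℂ) (F ξ) * ξ / (uC ξ) ^ 3 :=
    hbar_formula F ((hF.differentiable (by simp)) ξ)
  have hρ : rhoC F ξ = wdz F ξ - 2 * F ξ * (starRingEnd ℂ) ξ / uC ξ :=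
    rho_formula F ((hF.differentiable (by simp)) ξ)
  have hu := uC_ne ξ
  have hidentity : rhoC F ξ - (starRingEnd ℂ) (rhoC F ξ)
      = (uC ξ) ^ 2 / 2 * (wdzbar h ξ - (starRingEnd ℂ) (wdzbar h ξ)) := by
    rw [hρ, he]
    simp only [map_sub, map_mul, map_div₀, map_add, map_neg, map_ofNat, map_pow,
      Complex.conj_conj, conj_uC, map_one]
    field_simp
    ring
  have hconjρ : (starRingEnd ℂ) (rhoC F ξ) = rhoC F ξ := by
    have : rhoC F ξ - (starRingEnd ℂ) (rhoC F ξ) = 0 := by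
      rw [hidentity, hkey]; ring
    exact (sub_eq_zero.mp this).symm
  have := Complex.conj_eq_iff_im.1 hconjρ
  simpa [twistC] using this
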